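/- arXiv:2506.02955 — 9 statements merged into one kernel-verified Lean document; each statement's English description precedes it below -/
import Mathlib

section
/- Let h : ℝ^d → ℝ and let 𝒯 : [0,∞) → ℝ^d be a trajectory such that t ↦ h(𝒯(t)) is differentiable. Let γ : ℝ → ℝ be an extended class-𝒦 function that is locally Lipschitz continuous. If h(𝒯(0)) ≤ 0 and (d/dt) h(𝒯(t)) ≤ − γ(− h(𝒯(t))) for all t ≥ 0, then h(𝒯(t)) ≤ 0 for all t ≥ 0; that is, the feasible set {x ∈ ℝ^d : h(x) ≤ 0} is forward invariant along 𝒯. -/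
open Set Filter
open Topology

/-- A function `γ : ℝ → ℝ` is an extended class-𝒦 function if it is continuous,
strictly increasing, and `γ 0 = 0`. -/
def IsExtendedClassK (γ : ℝ → ℝ) : Prop :=
  Continuous γ ∧ StrictMono γ ∧ γ 0 = 0

/-- Barrier certificate for an inequality constraint: if `h (traj 0) ≤ 0` and
`(d/dt) h (traj t) ≤ - γ (- h (traj t))` for all `t ≥ 0`, with `γ` an extended
class-𝒦 function that is locally Lipschitz, then `h (traj t) ≤ 0` for all `t ≥ 0`,
i.e. the feasible set `{x | h x ≤ 0}` is forward invariant along the trajectory. -/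
theorem barrier_certificate_inequality_constraint
    {d : ℕ} (h : EuclideanSpace ℝ (Fin d) → ℝ)
    (traj : ℝ → EuclideanSpace ℝ (Fin d))
    (w : ℝ → ℝ)
    (hdiff : ∀ t ∈ Set.Ici (0:ℝ), HasDerivWithinAt (fun s => h (traj s)) (w t) (Set.Ici 0) t)
    (γ : ℝ → ℝ) (hγ : IsExtendedClassK γ) (hγlip : LocallyLipschitz γ)
    (h0 : h (traj 0) ≤ 0)
    (hineq : ∀ t ∈ Set.Ici (0:ℝ), w t ≤ - γ (- h (traj t))) :
    ∀ t ∈ Set.Ici (0:ℝ), h (traj t) ≤ 0 := by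
  obtain ⟨hγc, hγm, hγ0⟩ := hγ
  set f : ℝ → ℝ := fun s => h (traj s) with hfdef
  have hfc : ContinuousOn f (Set.Ici 0) := fun s hs => (hdiff s hs).continuousWithinAt
  intro t ht
  by_contra hpos
  push_neg at hpos
  have ht0 : (0:ℝ) ≤ t := ht
  -- the set of times in [0, t] where the constraint holds
  set S : Set ℝ := Set.Icc 0 t ∩ f ⁻¹' Set.Iic 0 with hSdef
  have hSne : S.Nonempty := ⟨0, ⟨le_refl 0, ht0⟩, h0⟩
  have hSbdd : BddAbove S := ⟨t, fun s hs => hs.1.2⟩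
  have hSclosed : IsClosed S :=
    (hfc.mono (Set.Icc_subset_Ici_self)).preimage_isClosed_of_isClosed
      isClosed_Icc isClosed_Iic
  set a := sSup S with hadef
  have haS : a ∈ S := hSclosed.csSup_mem hSne hSbdd
  have ha0 : (0:ℝ) ≤ a := haS.1.1
  have hat : a ≤ t := haS.1.2
  have hfa : f a ≤ 0 := haS.2
  have haltt : a < t := lt_of_le_of_ne hat (fun he => by simp [he] at hfa; linarith)
  -- any point of (a, t] has f > 0
  have hgt : ∀ s, a < s → s ≤ t → 0 < f s := by
    intro s h1 h2
    by_contra hc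
    push_neg at hc
    exact absurd (le_csSup hSbdd ⟨⟨ha0.trans h1.le, h2⟩, hc⟩) (not_le.mpr h1)
  -- f a = 0
  have hcont : ContinuousWithinAt f (Set.Ici 0) a := hfc a (Set.mem_Ici.mpr ha0)
  have hfa0 : f a = 0 := by
    rcases eq_or_lt_of_le hfa with he | hlt
    · exact he
    · exfalso
      have hev : ∀ᶠ s in 𝓝[Set.Ici 0] a, f s < 0 := hcont (Iio_mem_nhds hlt)
      have hle : 𝓝[Set.Ioi a] a ≤ 𝓝[Set.Ici 0] a :=
        nhdsWithin_mono a (fun s hs => le_trans ha0 (le_of_lt hs))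
      have hev2 : ∀ᶠ s in 𝓝[Set.Ioi a] a, f s < 0 := hev.filter_mono hle
      have hev3 : ∀ᶠ s in 𝓝[Set.Ioi a] a, s ∈ Set.Ioc a t :=
        Ioc_mem_nhdsGT_of_mem ⟨le_refl a, haltt⟩
      obtain ⟨s, hs1, hs2⟩ := (hev2.and hev3).exists
      exact absurd hs1 (not_lt.mpr (hgt s hs2.1 hs2.2).le)
  -- local Lipschitz constant near 0
  obtain ⟨K, U, hU, hlip⟩ := hγlip 0
  obtain ⟨ε, hε, hball⟩ := Metric.nhds_basis_closedBall.mem_iff.mp hU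
  -- γ x ≥ K x for x ∈ [-ε, 0]
  have hKbound : ∀ x : ℝ, -ε ≤ x → x ≤ 0 → (K : ℝ) * x ≤ γ x := by
    intro x h1 h2
    have hx : x ∈ Metric.closedBall (0:ℝ) ε := by
      simp only [Metric.mem_closedBall, Real.dist_eq, sub_zero]
      rw [abs_le]; constructor <;> linarith
    have h0' : (0:ℝ) ∈ Metric.closedBall (0:ℝ) ε := Metric.mem_closedBall_self hε.le
    have := hlip.dist_le_mul 0 (hball h0') x (hball hx)
    rw [Real.dist_eq, Real.dist_eq, hγ0, zero_sub, zero_sub, abs_neg, abs_neg,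
      abs_of_nonpos h2] at this
    have h3' := neg_abs_le (γ x)
    nlinarith
  -- pick t2 ∈ (a, t] with f < ε on [a, t2]
  have hev : ∀ᶠ s in 𝓝[Set.Ici 0] a, f s < ε := hcont (Iio_mem_nhds (by rw [hfa0]; exact hε))
  obtain ⟨δ', hδ', hδball⟩ := Metric.mem_nhdsWithin_iff.mp hev
  set t2 : ℝ := min (a + δ'/2) t with ht2def
  have hat2 : a < t2 := lt_min (by linarith) haltt
  have ht2t : t2 ≤ t := min_le_right _ _
  have hsmall : ∀ s, a ≤ s → s ≤ t2 → f s < ε := by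
    intro s h1 h2
    apply hδball
    constructor
    · simp only [Metric.mem_ball, Real.dist_eq]
      have : s ≤ a + δ'/2 := h2.trans (min_le_left _ _)
      rw [abs_lt]
      constructor <;> linarith
    · exact Set.mem_Ici.mpr (ha0.trans h1)
  -- Grönwall on [a, t2]
  have hG := le_gronwallBound_of_liminf_deriv_right_le
    (f := f) (f' := w) (δ := 0) (K := (K:ℝ)) (ε := 0) (a := a) (b := t2)
    (hfc.mono (fun s hs => Set.mem_Ici.mpr (ha0.trans hs.1)))
    (fun s hs r hr => by
      have hs0 : (0:ℝ) ≤ s := ha0.trans hs.1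
      have hd := (hdiff s (Set.mem_Ici.mpr hs0)).mono
        (Set.Ici_subset_Ici.mpr hs0)
      exact hd.liminf_right_slope_le hr)
    (by rw [hfa0])
    (fun s hs => by
      have hs0 : (0:ℝ) ≤ s := ha0.trans hs.1
      have hfs0 : 0 ≤ f s := by
        rcases eq_or_lt_of_le hs.1 with he | hlt
        · rw [← he, hfa0]
        · exact (hgt s hlt (hs.2.le.trans ht2t)).le
      have hfsε : f s < ε := hsmall s hs.1 hs.2.le
      have hK := hKbound (- f s) (by linarith) (by linarith)
      have hw := hineq s (Set.mem_Ici.mpr hs0)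
      simp only [hfdef] at *
      rw [mul_neg] at hK
      linarith)
  have := hG t2 ⟨hat2.le, le_refl t2⟩
  rw [gronwallBound_ε0] at this
  simp only [zero_mul] at this
  exact absurd (hgt t2 hat2 ht2t) (not_lt.mpr this)
end

section
/- Let T > 0 and c_r ∈ [0,1), and let γ_r : [0,T) × ℝ → ℝ be such that there exist extended class-𝒦 functions γ̲ and γ̄ with γ̲(ρ) ≤ γ_r(t, ρ) ≤ γ̄(ρ) for all t ∈ [c_r T, T) and all ρ ∈ ℝ. Let r : [0,∞) → ℝ be continuous, differentiable on [0,T) and on (T,∞), and satisfy r'(t) = −(T/(T−t)²) · γ_r(t, r(t)) for all t ∈ [0,T) and r'(t) = 0 for all t > T. Then, for every initial value r(0) ∈ ℝ, r(t) = 0 for all t ≥ T. -/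
/-! While `r ≥ ε` on the late stage `[cᵣ T, T)`, the equation gives `r' ≤ -T γlow(ε) / (T - t)²`,
so `r` stays below the barrier `r(a) + k / (T - a) - k / (T - t)` (`a = cᵣ T`, `k = T γlow(ε)`),
which tends to `-∞` as `t → T⁻`. Hence `r` falls to the level `ε` before `T`, and it cannot cross
that level upwards again because `r' < 0` there. The same argument for `-r`, with `γhigh`, gives `r t → 0` as `t → T⁻`; continuity
yields `r T = 0`, and `r' = 0` on `(T, ∞)` keeps `r` at `0`. -/

open Set Filter

open Topology

theorem tendsto_const_div_sub_nhdsLT_atTop {k : ℝ} (hk : 0 < k) (T : ℝ) :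
    Tendsto (fun x => k / (T - x)) (𝓝[<] T) atTop := by
  have hsub : Tendsto (fun x => T - x) (𝓝[<] T) (𝓝[>] 0) := by
    refine tendsto_nhdsWithin_of_tendsto_nhds_of_eventually_within _ ?_ ?_
    · exact ((continuous_sub_left T).tendsto' T 0 (sub_self T)).mono_left nhdsWithin_le_nhds
    · filter_upwards [self_mem_nhdsWithin] with x (hx : x < T) using sub_pos.2 hx
  exact ((tendsto_inv_nhdsGT_zero.comp hsub).const_mul_atTop hk).congr fun x =>
    (div_eq_mul_inv _ _).symm

section FencingNearT

variable {f f' : ℝ → ℝ} {a T ε : ℝ}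

theorem image_le_of_deriv_right_neg_at_level (hf : ContinuousOn f (Ico a T))
    (hf' : ∀ x ∈ Ico a T, HasDerivWithinAt f (f' x) (Ici x) x)
    (hneg : ∀ x ∈ Ico a T, f x = ε → f' x < 0) (ha : f a ≤ ε) :
    ∀ x ∈ Ico a T, f x ≤ ε := by
  intro x hx
  exact image_le_of_deriv_right_lt_deriv_boundary (hf.mono (Icc_subset_Ico_right hx.2))
    (fun y hy => hf' y ⟨hy.1, hy.2.trans hx.2⟩) ha (fun _ => hasDerivAt_const _ ε)
    (fun y hy hfy => hneg y ⟨hy.1, hy.2.trans hx.2⟩ hfy) ⟨hx.1, le_rfl⟩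

theorem exists_le_of_deriv_right_le_neg_div_sq {k : ℝ} (haT : a < T) (hk : 0 < k)
    (hf : ContinuousOn f (Ico a T))
    (hf' : ∀ x ∈ Ico a T, HasDerivWithinAt f (f' x) (Ici x) x)
    (hbound : ∀ x ∈ Ico a T, ε ≤ f x → f' x ≤ -(k / (T - x) ^ 2)) :
    ∃ x ∈ Ico a T, f x ≤ ε := by
  by_contra! hgt
  set B := fun x => f a + k / (T - a) - k / (T - x)
  have hB' : ∀ x < T, HasDerivAt B (-(k / (T - x) ^ 2)) x := fun x hx => by
    have hdiv := (hasDerivAt_const x k).div ((hasDerivAt_id x).const_sub T) (sub_pos.2 hx).ne'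
    exact (hdiv.const_sub (f a + k / (T - a))).congr_deriv (by simp only [id]; ring)
  have hfB : ∀ x ∈ Ico a T, f x ≤ B x := fun x hx =>
    image_le_of_deriv_right_le_deriv_boundary (hf.mono (Icc_subset_Ico_right hx.2))
      (fun y hy => hf' y ⟨hy.1, hy.2.trans hx.2⟩) (by simp [B])
      (fun y hy => (hB' y (hy.2.trans_lt hx.2)).continuousAt.continuousWithinAt)
      (fun y hy => (hB' y (hy.2.trans hx.2)).hasDerivWithinAt)
      (fun y hy => hbound y ⟨hy.1, hy.2.trans hx.2⟩ (hgt y ⟨hy.1, hy.2.trans hx.2⟩).le)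
      ⟨hx.1, le_rfl⟩
  have hBlow : ∀ᶠ x in 𝓝[<] T, B x < ε :=
    (tendsto_const_div_sub_nhdsLT_atTop hk T).eventually_gt_atTop (f a + k / (T - a) - ε)
      |>.mono fun x hx => by simp only [B]; linarith
  obtain ⟨x, hxB, hx⟩ := (hBlow.and (Ico_mem_nhdsLT haT)).exists
  exact (hgt x hx).not_ge ((hfB x hx).trans hxB.le)

theorem eventually_le_of_deriv_right_le_neg_div_sq {k : ℝ} (haT : a < T) (hk : 0 < k)
    (hf : ContinuousOn f (Ico a T))
    (hf' : ∀ x ∈ Ico a T, HasDerivWithinAt f (f' x) (Ici x) x)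
    (hbound : ∀ x ∈ Ico a T, ε ≤ f x → f' x ≤ -(k / (T - x) ^ 2)) :
    ∀ᶠ x in 𝓝[<] T, f x ≤ ε := by
  obtain ⟨x₀, hx₀, hfx₀⟩ := exists_le_of_deriv_right_le_neg_div_sq haT hk hf hf' hbound
  have hsub : Ico x₀ T ⊆ Ico a T := Ico_subset_Ico_left hx₀.1
  have hneg : ∀ x ∈ Ico x₀ T, f x = ε → f' x < 0 := fun x hx hfx =>
    (hbound x (hsub hx) hfx.ge).trans_lt
      (neg_neg_of_pos (div_pos hk (pow_pos (sub_pos.2 hx.2) 2)))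
  filter_upwards [Ico_mem_nhdsLT hx₀.2] with x hx
  exact image_le_of_deriv_right_neg_at_level (hf.mono hsub) (fun y hy => hf' y (hsub hy)) hneg
    hfx₀ x hx

end FencingNearT

section PrescribedTimeODE

variable {γ : ℝ → ℝ → ℝ} {r : ℝ → ℝ} {a T : ℝ}

theorem eventually_le_of_hasDerivWithinAt_ptzf {γlow : ℝ → ℝ} {ε : ℝ} (hT : 0 < T)
    (haT : a < T) (hmono : Monotone γlow) (hε : 0 < γlow ε)
    (hlow : ∀ t ∈ Ico a T, ∀ ρ, γlow ρ ≤ γ t ρ) (hr : ContinuousOn r (Ico a T))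
    (hode : ∀ t ∈ Ico a T, HasDerivWithinAt r (-(T / (T - t) ^ 2) * γ t (r t)) (Ici t) t) :
    ∀ᶠ t in 𝓝[<] T, r t ≤ ε := by
  refine eventually_le_of_deriv_right_le_neg_div_sq haT (mul_pos hT hε) hr hode ?_
  intro t ht hrt
  have hγ : γlow ε ≤ γ t (r t) := (hmono hrt).trans (hlow t ht (r t))
  calc -(T / (T - t) ^ 2) * γ t (r t) ≤ -(T / (T - t) ^ 2) * γlow ε :=
        mul_le_mul_of_nonpos_left hγ (neg_nonpos.2 (by positivity))
    _ = -(T * γlow ε / (T - t) ^ 2) := by ring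

theorem tendsto_nhdsLT_zero_of_hasDerivWithinAt_ptzf {γlow γhigh : ℝ → ℝ} (hT : 0 < T)
    (haT : a < T) (hlow_mono : StrictMono γlow) (hlow_zero : γlow 0 = 0)
    (hhigh_mono : StrictMono γhigh) (hhigh_zero : γhigh 0 = 0)
    (hsand : ∀ t ∈ Ico a T, ∀ ρ, γlow ρ ≤ γ t ρ ∧ γ t ρ ≤ γhigh ρ)
    (hr : ContinuousOn r (Ico a T))
    (hode : ∀ t ∈ Ico a T, HasDerivWithinAt r (-(T / (T - t) ^ 2) * γ t (r t)) (Ici t) t) :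
    Tendsto r (𝓝[<] T) (𝓝 0) := by
  refine tendsto_order.2 ⟨fun b hb => ?_, fun b hb => ?_⟩
  · -- `-r` solves the same equation with `γ t ρ` replaced by `-γ t (-ρ)`
    have hb' : 0 < -γhigh (-(-(b / 2))) := by
      rw [neg_neg, neg_pos, ← hhigh_zero]
      exact hhigh_mono (by linarith)
    have hneg := eventually_le_of_hasDerivWithinAt_ptzf (γ := fun t ρ => -γ t (-ρ)) hT haT
      (fun x y hxy => neg_le_neg (hhigh_mono.monotone (neg_le_neg hxy))) hb'
      (fun t ht ρ => neg_le_neg (hsand t ht (-ρ)).2) hr.neg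
      (fun t ht => (hode t ht).neg.congr_deriv (by simp only [Pi.neg_apply, neg_neg]; ring))
    filter_upwards [hneg] with t ht
    simp only [Pi.neg_apply] at ht
    linarith
  · have hb' : 0 < γlow (b / 2) := hlow_zero ▸ hlow_mono (half_pos hb)
    filter_upwards [eventually_le_of_hasDerivWithinAt_ptzf hT haT hlow_mono.monotone hb'
      (fun t ht ρ => (hsand t ht ρ).1) hr hode] with t ht
    linarith

end PrescribedTimeODE

/-- Property 1 (prescribed-time zeroing function): if `r` is continuous on `[0,∞)`,
satisfies `r' t = -(T/(T-t)²) · γᵣ (t, r t)` on `[0,T)` and `r' t = 0` on `(T,∞)`,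
where `γᵣ` is sandwiched between two extended class-𝒦 functions on the late stage
`[cᵣ T, T)`, then `r t = 0` for every `t ≥ T`, for an arbitrary initial value `r 0`. -/
theorem PTZF_reaches_zero_at_prescribed_time
    (T cᵣ : ℝ) (hT : 0 < T) (hcr : cᵣ ∈ Set.Ico (0:ℝ) 1)
    (γᵣ : ℝ → ℝ → ℝ)
    (γlow γhigh : ℝ → ℝ)
    (hγlow : IsExtendedClassK γlow) (hγhigh : IsExtendedClassK γhigh)
    (hsand : ∀ t ∈ Set.Ico (cᵣ * T) T, ∀ ρ : ℝ, γlow ρ ≤ γᵣ t ρ ∧ γᵣ t ρ ≤ γhigh ρ)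
    (r : ℝ → ℝ)
    (hrcont : ContinuousOn r (Set.Ici 0))
    (hode : ∀ t ∈ Set.Ico (0:ℝ) T,
      HasDerivWithinAt r (-(T / (T - t)^2) * γᵣ t (r t)) (Set.Ico 0 T) t)
    (hflat : ∀ t, T < t → HasDerivAt r 0 t) :
    ∀ t, T ≤ t → r t = 0 := by
  have ha : 0 ≤ cᵣ * T := mul_nonneg hcr.1 hT.le
  have haT : cᵣ * T < T := mul_lt_of_lt_one_left hT hcr.2
  have hsub : Ico (cᵣ * T) T ⊆ Ico 0 T := Ico_subset_Ico_left ha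
  have hode' : ∀ t ∈ Ico (cᵣ * T) T,
      HasDerivWithinAt r (-(T / (T - t) ^ 2) * γᵣ t (r t)) (Ici t) t := fun t ht =>
    (hode t (hsub ht)).mono_of_mem_nhdsWithin
      (mem_of_superset (Ico_mem_nhdsGE ht.2) (Ico_subset_Ico_left (ha.trans ht.1)))
  have hlim : Tendsto r (𝓝[<] T) (𝓝 0) :=
    tendsto_nhdsLT_zero_of_hasDerivWithinAt_ptzf hT haT hγlow.2.1 hγlow.2.2 hγhigh.2.1
      hγhigh.2.2 hsand (hrcont.mono fun t ht => (hsub ht).1) hode'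
  have hrT : r T = 0 := tendsto_nhds_unique
    ((hrcont.continuousWithinAt hT.le).mono_left
      (nhdsWithin_le_of_mem (mem_nhdsWithin_of_mem_nhds (Ici_mem_nhds hT)))) hlim
  intro t ht
  rcases ht.eq_or_lt with rfl | hlt
  · exact hrT
  obtain ⟨-, -, hslope⟩ := exists_hasDerivAt_eq_slope r (fun _ => 0) hlt
    (hrcont.mono fun x hx => hT.le.trans hx.1) fun x hx => hflat x hx.1
  rw [eq_comm, div_eq_zero_iff, sub_eq_zero, hrT] at hslope
  exact hslope.resolve_right (sub_ne_zero.2 hlt.ne')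
end

section
/- Let 𝒯 : [0,1] → ℝ^d be differentiable, let g_1, …, g_{N_g} : ℝ^d → ℝ be differentiable, and set g(x) := Σ_{i=1}^{N_g} g_i(x)². Let ḡ : [0,1] → ℝ be differentiable with ḡ(1) = 0 and ḡ(0) ≥ g(𝒯(0)), and let γ be an extended class-𝒦 function. If (d/dt) g(𝒯(t)) ≤ γ(ḡ(t) − g(𝒯(t))) + ḡ'(t) for all t ∈ [0,1], then g(𝒯(1)) = 0; equivalently, the equality constraints g_i(𝒯(1)) = 0 hold for all i = 1, …, N_g. -/
open Set Filter

/-- Theorem 1 (prescribed-time satisfaction of equality constraints): with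
`G = ∑ i, (g i)²`, a differentiable reference `gbar` with `gbar 1 = 0` and
`gbar 0 ≥ G (traj 0)`, and the PTZF-shaped differential inequality
`(d/dt) G (traj t) ≤ γ (gbar t - G (traj t)) + gbar' t` on `[0,1]`,
we get `G (traj 1) = 0`, i.e. `g i (traj 1) = 0` for all `i`. -/
theorem prescribed_time_equality_constraints
    {d Ng : ℕ}
    (traj : ℝ → EuclideanSpace ℝ (Fin d))
    (htraj : DifferentiableOn ℝ traj (Set.Icc 0 1))
    (g : Fin Ng → EuclideanSpace ℝ (Fin d) → ℝ)
    (hg : ∀ i, Differentiable ℝ (g i))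
    (G : EuclideanSpace ℝ (Fin d) → ℝ)
    (hG : ∀ x, G x = ∑ i, (g i x) ^ 2)
    (gbar : ℝ → ℝ)
    (hgbardiff : DifferentiableOn ℝ gbar (Set.Icc 0 1))
    (hgbar1 : gbar 1 = 0)
    (hgbar0 : G (traj 0) ≤ gbar 0)
    (γ : ℝ → ℝ) (hγ : IsExtendedClassK γ)
    (hineq : ∀ t ∈ Set.Icc (0:ℝ) 1,
      derivWithin (fun s => G (traj s)) (Set.Icc 0 1) t
        ≤ γ (gbar t - G (traj t)) + derivWithin gbar (Set.Icc 0 1) t) :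
    G (traj 1) = 0 ∧ ∀ i, g i (traj 1) = 0 := by
  obtain ⟨hγc, hγm, hγ0⟩ := hγ
  have hGdiff : Differentiable ℝ G := by
    have hsum : Differentiable ℝ (fun x => ∑ i, (g i x) ^ 2) :=
      Differentiable.fun_sum fun i _ => (hg i).pow 2
    have : G = fun x => ∑ i, (g i x) ^ 2 := funext hG
    rw [this]; exact hsum
  set f : ℝ → ℝ := fun s => G (traj s) with hf
  have hfdiff : DifferentiableOn ℝ f (Set.Icc 0 1) :=
    hGdiff.comp_differentiableOn htraj
  set h : ℝ → ℝ := fun s => f s - gbar s with hh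
  have hhdiff : DifferentiableOn ℝ h (Set.Icc 0 1) := hfdiff.sub hgbardiff
  have hUD : UniqueDiffOn ℝ (Set.Icc (0:ℝ) 1) := uniqueDiffOn_Icc one_pos
  set h' : ℝ → ℝ := fun s =>
    derivWithin f (Set.Icc 0 1) s - derivWithin gbar (Set.Icc 0 1) s with hh'
  -- right derivative of h on [0,1)
  have hhderiv : ∀ x ∈ Set.Ico (0:ℝ) 1, HasDerivWithinAt h (h' x) (Set.Ici x) x := by
    intro x hx
    have hxI : x ∈ Set.Icc (0:ℝ) 1 := ⟨hx.1, le_of_lt hx.2⟩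
    have h1 : HasDerivWithinAt f (derivWithin f (Set.Icc 0 1) x) (Set.Icc 0 1) x :=
      (hfdiff x hxI).hasDerivWithinAt
    have h2 : HasDerivWithinAt gbar (derivWithin gbar (Set.Icc 0 1) x) (Set.Icc 0 1) x :=
      (hgbardiff x hxI).hasDerivWithinAt
    have hmem : Set.Icc (0:ℝ) 1 ∈ nhdsWithin x (Set.Ici x) := by
      refine mem_nhdsWithin.2 ⟨Set.Iio 1, isOpen_Iio, hx.2, ?_⟩
      rintro y ⟨hy1, hy2⟩
      exact ⟨le_trans hx.1 hy2, le_of_lt hy1⟩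
    exact ((h1.sub h2).mono_of_mem_nhdsWithin hmem)
  -- fencing: h t ≤ c for every c > 0
  have key : ∀ c > (0:ℝ), h 1 ≤ c := by
    intro c hc
    have := image_le_of_deriv_right_lt_deriv_boundary
      (f := h) (f' := h') (a := 0) (b := 1) (B := fun _ => c) (B' := fun _ => 0)
      (hhdiff.continuousOn) hhderiv
      (by
        simp only [hh, hf]
        have : G (traj 0) - gbar 0 ≤ 0 := by linarith
        linarith)
      (fun x => hasDerivAt_const x c)
      (by
        intro x hx hxc
        have hxI : x ∈ Set.Icc (0:ℝ) 1 := ⟨hx.1, le_of_lt hx.2⟩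
        have hle := hineq x hxI
        have harg : gbar x - G (traj x) = -c := by
          have : f x - gbar x = c := hxc
          simp only [hf] at this ⊢
          linarith
        have hneg : γ (gbar x - G (traj x)) < 0 := by
          rw [harg, ← hγ0]
          exact hγm (by linarith)
        simp only [hh']
        linarith)
    have h1mem : (1:ℝ) ∈ Set.Icc (0:ℝ) 1 := ⟨zero_le_one, le_refl 1⟩
    exact this h1mem
  have hle0 : h 1 ≤ 0 := le_of_forall_pos_le_add (by
    intro ε hε
    have := key ε hε
    linarith)
  have hG1le : G (traj 1) ≤ 0 := by
    have : f 1 - gbar 1 ≤ 0 := hle0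
    simp only [hf] at this
    linarith
  have hGnonneg : 0 ≤ G (traj 1) := by
    rw [hG]
    exact Finset.sum_nonneg fun i _ => sq_nonneg _
  have hG1 : G (traj 1) = 0 := le_antisymm hG1le hGnonneg
  refine ⟨hG1, fun i => ?_⟩
  have hsum0 : ∑ j, (g j (traj 1)) ^ 2 = 0 := by rw [← hG]; exact hG1
  have := (Finset.sum_eq_zero_iff_of_nonneg (fun j _ => sq_nonneg (g j (traj 1)))).1 hsum0
  have := this i (Finset.mem_univ i)
  exact pow_eq_zero_iff (n := 2) (by norm_num) |>.1 this
end

section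
/- Let 𝒯 : [0,1] → ℝ^d be differentiable and let h : ℝ^d → ℝ be differentiable. Let h̄ : [0,1] → ℝ be differentiable with h̄(1) = 0 and h̄(0) ≥ h(𝒯(0)), and let γ be an extended class-𝒦 function. If (d/dt) h(𝒯(t)) ≤ γ(h̄(t) − h(𝒯(t))) + h̄'(t) for all t ∈ [0,1], then h(𝒯(t)) ≤ h̄(t) for all t ∈ [0,1]; in particular the inequality constraint h(𝒯(1)) ≤ 0 is satisfied at the end of the generation process. -/
open Set Filter

/-!
Put `f t = h (traj t)`. Whenever `f t ≥ hbar t`, monotonicity of `γ` gives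
`γ (hbar t - f t) ≤ γ 0 = 0`, so there `f` grows no faster than `hbar`. A barrier that
obeys this only on the region `f ≥ B` still fences `f`: for each `ε > 0` the barrier
`B + ε (x - a + 1)` is strictly faster at every contact point, so the strict fencing theorem
applies, and `ε → 0` gives `f ≤ B`. At `t = 1` this reads `h (traj 1) ≤ hbar 1 = 0`.
-/

theorem image_le_of_deriv_right_le_deriv_of_ge_boundary {f f' B B' : ℝ → ℝ} {a b : ℝ}
    (hf : ContinuousOn f (Icc a b)) (hf' : ∀ x ∈ Ico a b, HasDerivWithinAt f (f' x) (Ici x) x)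
    (ha : f a ≤ B a) (hB : ContinuousOn B (Icc a b))
    (hB' : ∀ x ∈ Ico a b, HasDerivWithinAt B (B' x) (Ici x) x)
    (bound : ∀ x ∈ Ico a b, B x ≤ f x → f' x ≤ B' x) :
    ∀ ⦃x⦄, x ∈ Icc a b → f x ≤ B x := by
  have fenced : ∀ ε > 0, ∀ ⦃x⦄, x ∈ Icc a b → f x ≤ B x + ε * (x - a + 1) := by
    intro ε hε
    have hlin : ∀ x, HasDerivAt (fun x => ε * (x - a + 1)) ε x := fun x => by
      simpa using ((hasDerivAt_id x).sub_const a |>.add_const 1).const_mul ε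
    refine image_le_of_deriv_right_lt_deriv_boundary' hf hf'
      (by linarith [show ε * (a - a + 1) = ε by ring])
      (hB.add (Continuous.continuousOn (by fun_prop)))
      (fun x hx => (hB' x hx).add (hlin x).hasDerivWithinAt) fun x hx hcontact => ?_
    have hBf : B x ≤ f x := by nlinarith [hx.1]
    linarith [bound x hx hBf]
  intro x hx
  refine le_of_forall_pos_le_add fun δ hδ => ?_
  have hpos : 0 < x - a + 1 := by linarith [hx.1]
  simpa [div_mul_cancel₀ δ hpos.ne'] using fenced (δ / (x - a + 1)) (div_pos hδ hpos) hx

theorem DifferentiableOn.hasDerivWithinAt_Ici_derivWithin_Icc {f : ℝ → ℝ} {a b x : ℝ}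
    (hf : DifferentiableOn ℝ f (Icc a b)) (hx : x ∈ Ico a b) :
    HasDerivWithinAt f (derivWithin f (Icc a b) x) (Ici x) x :=
  (hf x (Ico_subset_Icc_self hx)).hasDerivWithinAt.mono_of_mem_nhdsWithin
    (Icc_mem_nhdsGE_of_mem hx)

/-- Theorem 2 (prescribed-time satisfaction of an inequality constraint): with a
differentiable reference `hbar`, `hbar 1 = 0`, `hbar 0 ≥ h (traj 0)`, and the
differential inequality `(d/dt) h (traj t) ≤ γ (hbar t - h (traj t)) + hbar' t`
on `[0,1]`, one has `h (traj t) ≤ hbar t` on `[0,1]`; in particular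
`h (traj 1) ≤ 0`. -/
theorem prescribed_time_inequality_constraint
    {d : ℕ}
    (traj : ℝ → EuclideanSpace ℝ (Fin d))
    (htraj : DifferentiableOn ℝ traj (Set.Icc 0 1))
    (h : EuclideanSpace ℝ (Fin d) → ℝ)
    (hh : Differentiable ℝ h)
    (hbar : ℝ → ℝ)
    (hhbardiff : DifferentiableOn ℝ hbar (Set.Icc 0 1))
    (hhbar1 : hbar 1 = 0)
    (hhbar0 : h (traj 0) ≤ hbar 0)
    (γ : ℝ → ℝ) (hγ : IsExtendedClassK γ)
    (hineq : ∀ t ∈ Set.Icc (0:ℝ) 1,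
      derivWithin (fun s => h (traj s)) (Set.Icc 0 1) t
        ≤ γ (hbar t - h (traj t)) + derivWithin hbar (Set.Icc 0 1) t) :
    (∀ t ∈ Set.Icc (0:ℝ) 1, h (traj t) ≤ hbar t) ∧ h (traj 1) ≤ 0 := by
  obtain ⟨-, hγmono, hγ0⟩ := hγ
  have hf : DifferentiableOn ℝ (fun s => h (traj s)) (Icc 0 1) := hh.comp_differentiableOn htraj
  have hle : ∀ t ∈ Icc (0:ℝ) 1, h (traj t) ≤ hbar t :=
    image_le_of_deriv_right_le_deriv_of_ge_boundary hf.continuousOn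
      (fun _ hx => hf.hasDerivWithinAt_Ici_derivWithin_Icc hx) hhbar0 hhbardiff.continuousOn
      (fun _ hx => hhbardiff.hasDerivWithinAt_Ici_derivWithin_Icc hx) fun t ht hge => by
        have hγnonpos : γ (hbar t - h (traj t)) ≤ 0 :=
          hγ0 ▸ hγmono.monotone (sub_nonpos.2 hge)
        linarith [hineq t (Ico_subset_Icc_self ht)]
  exact ⟨hle, hhbar1 ▸ hle 1 (right_mem_Icc.2 zero_le_one)⟩
end

section
/- Let T > 0, let x : [0,T] → ℝ be differentiable, and let γ be an extended class-𝒦 function. If x(0) ≥ 0 and x'(t) ≥ − γ(x(t)) for all t ∈ [0,T], then x(t) ≥ 0 for all t ∈ [0,T]. -/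
open Set Filter

/-- Comparison-principle invariance: if `x 0 ≥ 0` and `x' t ≥ - γ (x t)` on `[0,T]`
for an extended class-𝒦 function `γ`, then `x t ≥ 0` on `[0,T]`. -/
theorem nonnegativity_invariance_comparison
    (T : ℝ) (hT : 0 < T)
    (x x' : ℝ → ℝ)
    (hx : ∀ t ∈ Set.Icc 0 T, HasDerivWithinAt x (x' t) (Set.Icc 0 T) t)
    (γ : ℝ → ℝ) (hγ : IsExtendedClassK γ)
    (hx0 : 0 ≤ x 0)
    (hineq : ∀ t ∈ Set.Icc 0 T, - γ (x t) ≤ x' t) :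
    ∀ t ∈ Set.Icc 0 T, 0 ≤ x t := by
  obtain ⟨hγc, hγm, hγ0⟩ := hγ
  have hxc : ContinuousOn x (Set.Icc 0 T) := fun t ht =>
    (hx t ht).continuousWithinAt
  intro t ht
  by_contra hneg
  push_neg at hneg
  -- set of points in [0,t] where x ≥ 0
  set S : Set ℝ := Set.Icc 0 t ∩ {u | 0 ≤ x u} with hS
  have hsub : Set.Icc 0 t ⊆ Set.Icc 0 T := Set.Icc_subset_Icc le_rfl ht.2
  have hSclosed : IsClosed S := by
    have h1 : IsClosed (Set.Icc 0 T ∩ x ⁻¹' Set.Ici 0) :=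
      hxc.preimage_isClosed_of_isClosed isClosed_Icc (isClosed_Ici (a := (0:ℝ)))
    have hSeq : S = Set.Icc 0 t ∩ (Set.Icc 0 T ∩ x ⁻¹' Set.Ici 0) := by
      ext u
      simp only [hS, Set.mem_inter_iff, Set.mem_preimage, Set.mem_Ici, Set.mem_setOf_eq]
      exact ⟨fun ⟨h, h'⟩ => ⟨h, hsub h, h'⟩, fun ⟨h, _, h'⟩ => ⟨h, h'⟩⟩
    rw [hSeq]
    exact isClosed_Icc.inter h1
  have h0S : (0 : ℝ) ∈ S := ⟨⟨le_rfl, ht.1⟩, hx0⟩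
  have hSne : S.Nonempty := ⟨0, h0S⟩
  have hSbdd : BddAbove S := ⟨t, fun u hu => hu.1.2⟩
  set s := sSup S with hs
  have hsS : s ∈ S := hSclosed.csSup_mem hSne hSbdd
  have hst : s ≤ t := csSup_le hSne fun u hu => hu.1.2
  have hs0 : 0 ≤ s := le_csSup hSbdd h0S
  have hxs : 0 ≤ x s := hsS.2
  have hslt : s < t := lt_of_le_of_ne hst (fun h => absurd (h ▸ hxs) (not_le.2 hneg))
  -- for u in (s, t], x u < 0
  have hneg' : ∀ u ∈ Set.Ioc s t, x u < 0 := by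
    intro u hu
    by_contra h
    push_neg at h
    have : u ∈ S := ⟨⟨hs0.trans hu.1.le, hu.2⟩, h⟩
    exact absurd (le_csSup hSbdd this) (not_le.2 hu.1)
  -- x is monotone on [s, t]
  have hmono : MonotoneOn x (Set.Icc s t) := by
    have hsub' : Set.Icc s t ⊆ Set.Icc 0 T := Set.Icc_subset_Icc hs0 (ht.2)
    apply monotoneOn_of_deriv_nonneg (convex_Icc s t) (hxc.mono hsub')
    · intro u hu
      rw [interior_Icc] at hu
      have huIcc : u ∈ Set.Icc 0 T := hsub' ⟨hu.1.le, hu.2.le⟩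
      have hnhds : Set.Icc 0 T ∈ nhds u := by
        apply Icc_mem_nhds (lt_of_le_of_lt hs0 hu.1) (lt_of_lt_of_le hu.2 ht.2)
      exact ((hx u huIcc).hasDerivAt hnhds).differentiableAt.differentiableWithinAt
    · intro u hu
      rw [interior_Icc] at hu
      have huIcc : u ∈ Set.Icc 0 T := ⟨hs0.trans hu.1.le, hu.2.le.trans ht.2⟩
      have hnhds : Set.Icc 0 T ∈ nhds u := by
        apply Icc_mem_nhds (lt_of_le_of_lt hs0 hu.1) (lt_of_lt_of_le hu.2 ht.2)
      have hd : HasDerivAt x (x' u) u := (hx u huIcc).hasDerivAt hnhds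
      rw [hd.deriv]
      have hxu : x u < 0 := hneg' u ⟨hu.1, hu.2.le⟩
      have : γ (x u) < γ 0 := hγm hxu
      rw [hγ0] at this
      have h1 := hineq u huIcc
      linarith
  have := hmono ⟨le_rfl, hslt.le⟩ ⟨hslt.le, le_rfl⟩ hslt.le
  linarith [hneg' t ⟨hslt, le_rfl⟩]
end

section
/- Let 𝒯 : [0,1] → ℝ^d be differentiable and evolve under the guided flow 𝒯'(t) = v(t, 𝒯(t)) + u(t) for a velocity field v : [0,1] × ℝ^d → ℝ^d and a guidance input u : [0,1] → ℝ^d. Let g_1, …, g_{N_g}, h_1, …, h_{N_h} : ℝ^d → ℝ be differentiable, set g := Σ_{i=1}^{N_g} g_i², and let ḡ, h̄_1, …, h̄_{N_h} : [0,1] → ℝ be differentiable with ḡ(1) = 0, h̄_j(1) = 0 for all j, ḡ(0) ≥ g(𝒯(0)), and h̄_j(0) ≥ h_j(𝒯(0)) for all j. Let γ be an extended class-𝒦 function. If for every t ∈ [0,1] the guidance input satisfies ⟨∇g(𝒯(t)), v(t,𝒯(t)) + u(t)⟩ ≤ γ(ḡ(t) − g(𝒯(t))) + ḡ'(t) and ⟨∇h_j(𝒯(t)),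 v(t,𝒯(t)) + u(t)⟩ ≤ γ(h̄_j(t) − h_j(𝒯(t))) + h̄_j'(t) for every j, then the generated sample 𝒯(1) is certified: g_i(𝒯(1)) = 0 for all i = 1, …, N_g and h_j(𝒯(1)) ≤ 0 for all j = 1, …, N_h. -/
/-!
Along the flow, `φ = G ∘ traj` (resp. `h j ∘ traj`) satisfies `φ' ≤ γ (B - φ) + B'` with
`B = gbar` (resp. `hbar j`), and a comparison argument keeps `φ ≤ B` on `[0, 1]`. At `t = 1` the
bounds vanish, so `h j (traj 1) ≤ 0` and `0 ≤ G (traj 1) ≤ 0`, forcing every `g i (traj 1) = 0`.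
-/

open Set Filter RealInnerProductSpace

theorem DifferentiableAt.hasDerivWithinAt_comp_inner_gradient
    {E : Type*} [NormedAddCommGroup E] [InnerProductSpace ℝ E] [CompleteSpace E]
    {f : E → ℝ} {c : ℝ → E} {c' : E} {s : Set ℝ} {t : ℝ}
    (hf : DifferentiableAt ℝ f (c t)) (hc : HasDerivWithinAt c c' s t) :
    HasDerivWithinAt (fun τ => f (c τ)) ⟪gradient f (c t), c'⟫ s t := by
  simpa [Function.comp_def, InnerProductSpace.toDual_apply_apply] using
    hf.hasGradientAt.hasFDerivAt.comp_hasDerivWithinAt t hc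

/-- At a first contact of `φ` with `B + ε` the hypothesis forces `φ' ≤ γ (-ε) + B' < B'`,
so `φ` cannot cross the barrier. -/
theorem le_of_hasDerivWithinAt_le_gap_add {φ B φ' B' γ : ℝ → ℝ} {a b : ℝ}
    (hγ : ∀ x < 0, γ x < 0)
    (hφ : ∀ t ∈ Icc a b, HasDerivWithinAt φ (φ' t) (Icc a b) t)
    (hB : ∀ t ∈ Icc a b, HasDerivWithinAt B (B' t) (Icc a b) t)
    (ha : φ a ≤ B a)
    (hle : ∀ t ∈ Icc a b, φ' t ≤ γ (B t - φ t) + B' t) :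
    ∀ t ∈ Icc a b, φ t ≤ B t := by
  intro t ht
  refine le_of_forall_pos_le_add fun ε hε => ?_
  refine image_le_of_deriv_right_lt_deriv_boundary' (B := fun τ => B τ + ε)
    (fun τ hτ => (hφ τ hτ).continuousWithinAt)
    (fun τ hτ => (hφ τ (Ico_subset_Icc_self hτ)).mono_of_mem_nhdsWithin
      (Icc_mem_nhdsGE_of_mem hτ))
    (by linarith)
    (fun τ hτ => (hB τ hτ).continuousWithinAt.add continuousWithinAt_const)
    (fun τ hτ => ((hB τ (Ico_subset_Icc_self hτ)).mono_of_mem_nhdsWithin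
      (Icc_mem_nhdsGE_of_mem hτ)).add_const ε)
    (fun τ hτ hcontact => ?_) ht
  have hgap : B τ - φ τ = -ε := by linarith
  have := hle τ (Ico_subset_Icc_self hτ)
  rw [hgap] at this
  linarith [hγ (-ε) (neg_neg_of_pos hε)]

/-- Theorem 3 (certified sample from the guided flow): if the guided flow
`traj' t = v t (traj t) + u t` satisfies the PTZF-shaped guidance inequalities
for the aggregated equality constraint `G = ∑ i (g i)²` and for each inequality
constraint `h j`, then the generated sample `traj 1` is certified:
`g i (traj 1) = 0` for all `i` and `h j (traj 1) ≤ 0` for all `j`. -/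
theorem guided_flow_produces_certified_sample
    {d Ng Nh : ℕ}
    (traj : ℝ → EuclideanSpace ℝ (Fin d))
    (v : ℝ → EuclideanSpace ℝ (Fin d) → EuclideanSpace ℝ (Fin d))
    (u : ℝ → EuclideanSpace ℝ (Fin d))
    (hflow : ∀ t ∈ Set.Icc (0:ℝ) 1,
      HasDerivWithinAt traj (v t (traj t) + u t) (Set.Icc 0 1) t)
    (g : Fin Ng → EuclideanSpace ℝ (Fin d) → ℝ) (hg : ∀ i, Differentiable ℝ (g i))
    (h : Fin Nh → EuclideanSpace ℝ (Fin d) → ℝ) (hh : ∀ j, Differentiable ℝ (h j))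
    (G : EuclideanSpace ℝ (Fin d) → ℝ) (hG : ∀ x, G x = ∑ i, (g i x) ^ 2)
    (gbar : ℝ → ℝ) (hbar : Fin Nh → ℝ → ℝ)
    (hgbardiff : DifferentiableOn ℝ gbar (Set.Icc 0 1))
    (hhbardiff : ∀ j, DifferentiableOn ℝ (hbar j) (Set.Icc 0 1))
    (hgbar1 : gbar 1 = 0) (hhbar1 : ∀ j, hbar j 1 = 0)
    (hgbar0 : G (traj 0) ≤ gbar 0) (hhbar0 : ∀ j, h j (traj 0) ≤ hbar j 0)
    (γ : ℝ → ℝ) (hγ : IsExtendedClassK γ)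
    (hguide_g : ∀ t ∈ Set.Icc (0:ℝ) 1,
      ⟪gradient G (traj t), v t (traj t) + u t⟫
        ≤ γ (gbar t - G (traj t)) + derivWithin gbar (Set.Icc 0 1) t)
    (hguide_h : ∀ j, ∀ t ∈ Set.Icc (0:ℝ) 1,
      ⟪gradient (h j) (traj t), v t (traj t) + u t⟫
        ≤ γ (hbar j t - h j (traj t)) + derivWithin (hbar j) (Set.Icc 0 1) t) :
    (∀ i, g i (traj 1) = 0) ∧ ∀ j, h j (traj 1) ≤ 0 := by
  have hγneg : ∀ x < 0, γ x < 0 := fun _ hx => hγ.2.2 ▸ hγ.2.1 hx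
  have h1 : (1 : ℝ) ∈ Icc (0 : ℝ) 1 := right_mem_Icc.2 zero_le_one
  have along_flow : ∀ f : EuclideanSpace ℝ (Fin d) → ℝ, Differentiable ℝ f →
      ∀ t ∈ Icc (0 : ℝ) 1, HasDerivWithinAt (fun s => f (traj s))
        ⟪gradient f (traj t), v t (traj t) + u t⟫ (Icc 0 1) t :=
    fun f hf t ht => (hf _).hasDerivWithinAt_comp_inner_gradient (hflow t ht)
  have hGdiff : Differentiable ℝ G := by
    rw [funext hG]
    exact Differentiable.fun_sum fun i _ => (hg i).pow 2
  have hGle : G (traj 1) ≤ 0 := hgbar1 ▸ le_of_hasDerivWithinAt_le_gap_add hγneg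
    (along_flow G hGdiff) (fun t ht => (hgbardiff t ht).hasDerivWithinAt) hgbar0 hguide_g 1 h1
  have hsum : ∑ i, g i (traj 1) ^ 2 = 0 :=
    le_antisymm (hG _ ▸ hGle) (Finset.sum_nonneg fun i _ => sq_nonneg _)
  refine ⟨fun i => ?_, fun j => ?_⟩
  · exact pow_eq_zero_iff two_ne_zero |>.1 <|
      (Finset.sum_eq_zero_iff_of_nonneg fun i _ => sq_nonneg _).1 hsum i (Finset.mem_univ i)
  · exact hhbar1 j ▸ le_of_hasDerivWithinAt_le_gap_add hγneg (along_flow (h j) (hh j))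
      (fun t ht => (hhbardiff j t ht).hasDerivWithinAt) (hhbar0 j) (hguide_h j) 1 h1
end

section
/- Let c_γ > 0 and let φ : [0,1) → (0,∞) be a continuous blow-up function with lim_{t→1⁻} φ(t) = ∞ and ∫₀¹ φ(s) ds = ∞. Let 𝒯 : [0,1] → ℝ^d be continuous, and let g_1, …, g_{N_g}, h_1, …, h_{N_h} : ℝ^d → ℝ be differentiable with g := Σ_{i=1}^{N_g} g_i², such that g(𝒯(·)) and each h_j(𝒯(·)) are differentiable on [0,1). Let ḡ, h̄_1, …, h̄_{N_h} : [0,1] → ℝ be continuous, differentiable on [0,1), with ḡ(1) = 0 and h̄_j(1) = 0 for all j. Let δ_g, δ_{h,1}, …, δ_{h,N_h} : [0,1) → ℝ be slack functions bounded above by constants δ̄_g, δ̄_{h,j} > 0, and let γ : ℝ → ℝ satisfy, along the trajectory, γ(ḡ(t) − g(𝒯(t))) ≤ c_γ φ(t) (ḡ(t) − g(𝒯(t))) and γ(h̄_j(t) − h_j(𝒯(t))) ≤ c_γ φ(t) (h̄_j(t) − h_j(𝒯(t))) for all t ∈ [0,1) and all j. If for all t ∈ [0,1), (d/dt) g(𝒯(t))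 ≤ γ(ḡ(t) − g(𝒯(t))) + ḡ'(t) + δ_g(t) and (d/dt) h_j(𝒯(t)) ≤ γ(h̄_j(t) − h_j(𝒯(t))) + h̄_j'(t) + δ_{h,j}(t) for all j, then g_i(𝒯(1)) = 0 for all i = 1, …, N_g and h_j(𝒯(1)) ≤ 0 for all j = 1, …, N_h. -/
/-!
For a constraint value `y` with reference `ybar`, the gap `e = y - ybar` satisfies
`e' ≤ -c φ e + δbar` on `[0,1)`. Fix `ε > 0`. Near `1` the blow-up gives `c ε φ > |δbar|`, so
`e' < 0` wherever `e = ε`: the level `ε` cannot be crossed upwards. It is reached, since while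
`e > ε` we have `e' ≤ -c ε φ + δbar`, and the divergence of `∫ φ` would drive `e` to `-∞`.
Hence `e 1 ≤ ε` for all `ε > 0`, i.e. `y 1 ≤ ybar 1 = 0`; for the equalities apply this to
`G = ∑ gᵢ²`.
-/

open Set Filter MeasureTheory intervalIntegral Topology

section ComparisonNearEndpoint

variable {a b : ℝ} {φ e e' : ℝ → ℝ}

lemma tendsto_integral_atTop_of_le {a' : ℝ} (ha : a ≤ a') (hb : a' < b)
    (hφ : ContinuousOn φ (Ico a b))
    (hdiv : Tendsto (fun t => ∫ s in a..t, φ s) (𝓝[<] b) atTop) :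
    Tendsto (fun t => ∫ s in a'..t, φ s) (𝓝[<] b) atTop := by
  have hsplit : ∀ᶠ t in 𝓝[<] b,
      (∫ s in a..t, φ s) + -∫ s in a..a', φ s = ∫ s in a'..t, φ s := by
    filter_upwards [Ioo_mem_nhdsLT hb] with t ht
    rw [← integral_add_adjacent_intervals
      ((hφ.mono (Icc_subset_Ico_right hb)).intervalIntegrable_of_Icc ha)
      ((hφ.mono (Icc_subset_Ico ha ht.2)).intervalIntegrable_of_Icc ht.1.le)]
    ring
  exact (tendsto_atTop_add_const_right _ _ hdiv).congr' hsplit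

lemma tendsto_atBot_of_deriv_le_neg_mul_add {κ δ : ℝ} (hab : a < b) (hκ : 0 < κ)
    (hφ : ContinuousOn φ (Ico a b))
    (hdiv : Tendsto (fun t => ∫ s in a..t, φ s) (𝓝[<] b) atTop)
    (he : ContinuousOn e (Ico a b)) (he' : ∀ t ∈ Ioo a b, HasDerivAt e (e' t) t)
    (hle : ∀ t ∈ Ioo a b, e' t ≤ -κ * φ t + δ) :
    Tendsto e (𝓝[<] b) atBot := by
  have hbound : ∀ t ∈ Ioo a b, e t ≤ e a + δ * (t - a) + -κ * ∫ s in a..t, φ s := by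
    intro t ht
    have hsub : Icc a t ⊆ Ico a b := Icc_subset_Ico_right ht.2
    have hφint : IntervalIntegrable φ volume a t :=
      (hφ.mono hsub).intervalIntegrable_of_Icc ht.1.le
    have hFTC := sub_le_integral_of_hasDeriv_right_of_le (φ := fun x => -κ * φ x + δ)
      ht.1.le (he.mono hsub) (fun x hx => (he' x ⟨hx.1, hx.2.trans ht.2⟩).hasDerivWithinAt)
      ((continuousOn_const.mul (hφ.mono hsub)).add continuousOn_const).integrableOn_Icc
      (fun x hx => hle x ⟨hx.1, hx.2.trans ht.2⟩)
    rw [intervalIntegral.integral_add (hφint.const_mul _) intervalIntegrable_const,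
      intervalIntegral.integral_const_mul,
      intervalIntegral.integral_const, smul_eq_mul] at hFTC
    linarith
  refine tendsto_atBot_mono' _ (eventually_of_mem (Ioo_mem_nhdsLT hab) hbound) ?_
  exact Tendsto.add_atBot ((continuous_const.add (continuous_const.mul
    (continuous_id.sub continuous_const))).tendsto b |>.mono_left nhdsWithin_le_nhds)
    (hdiv.const_mul_atTop_of_neg (neg_neg_of_pos hκ))

lemma nonpos_of_deriv_le_neg_mul_add {c δ : ℝ} (hab : a < b) (hc : 0 < c)
    (hφ : ContinuousOn φ (Ico a b)) (hφblow : Tendsto φ (𝓝[<] b) atTop)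
    (hdiv : Tendsto (fun t => ∫ s in a..t, φ s) (𝓝[<] b) atTop)
    (he : ContinuousOn e (Icc a b)) (he' : ∀ t ∈ Ioo a b, HasDerivAt e (e' t) t)
    (hle : ∀ t ∈ Ioo a b, e' t ≤ -(c * φ t) * e t + δ) :
    e b ≤ 0 := by
  refine le_of_forall_pos_le_add fun ε hε => ?_
  rw [zero_add]
  obtain ⟨l, hl, hlarge⟩ : ∃ l ∈ Ico a b, Ioo l b ⊆ {t | |δ| < c * ε * φ t} :=
    (mem_nhdsLT_iff_exists_mem_Ico_Ioo_subset hab).1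
      ((hφblow.const_mul_atTop (mul_pos hc hε)).eventually_gt_atTop |δ|)
  have hsub : Ioo l b ⊆ Ioo a b := Ioo_subset_Ioo_left hl.1
  have hdecay : ∀ t ∈ Ioo l b, ε ≤ e t → e' t ≤ -(c * ε) * φ t + δ := by
    intro t ht hεt
    have hφt : 0 ≤ c * φ t := by
      have := (abs_nonneg δ).trans_lt (hlarge ht)
      rw [mul_right_comm] at this
      exact (pos_of_mul_pos_left this hε.le).le
    nlinarith [hle t (hsub ht), mul_le_mul_of_nonneg_left hεt hφt]
  -- The divergent integral forces `e` below `ε` somewhere near `b` ...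
  obtain ⟨t₁, ht₁, het₁⟩ : ∃ t₁ ∈ Ioo l b, e t₁ ≤ ε := by
    by_contra! hgt
    have hbot := tendsto_atBot_of_deriv_le_neg_mul_add hl.2 (mul_pos hc hε)
      (hφ.mono (Ico_subset_Ico_left hl.1)) (tendsto_integral_atTop_of_le hl.1 hl.2 hφ hdiv)
      (he.mono (Ico_subset_Icc_self.trans (Icc_subset_Icc_left hl.1)))
      (fun t ht => he' t (hsub ht))
      (fun t ht => hdecay t ht (hgt t ht).le)
    obtain ⟨t, hte, ht⟩ :=
      ((hbot.eventually (eventually_le_atBot ε)).and (Ioo_mem_nhdsLT hl.2)).exists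
    exact (hgt t ht).not_ge hte
  -- ... and the blow-up of `φ` keeps it there.
  have hbarrier : ∀ t ∈ Ioo t₁ b, e t ≤ ε := by
    intro t ht
    have hsub' : Icc t₁ t ⊆ Ioo l b := Icc_subset_Ioo ht₁.1 ht.2
    refine image_le_of_deriv_right_lt_deriv_boundary (B := fun _ => ε) (B' := fun _ => 0)
      (he.mono ?_) (fun x hx => (he' x (hsub (hsub' (Ico_subset_Icc_self hx)))).hasDerivWithinAt)
      het₁ (fun _ => hasDerivAt_const _ _) (fun x hx hex => ?_) ⟨ht.1.le, le_rfl⟩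
    · exact hsub'.trans (hsub.trans Ioo_subset_Icc_self)
    · have hx := hsub' (Ico_subset_Icc_self hx)
      have hδx : |δ| < c * ε * φ x := hlarge hx
      linarith [hdecay x hx hex.ge, le_abs_self δ]
  have hcont : Tendsto e (𝓝[<] b) (𝓝 (e b)) := by
    rw [← nhdsWithin_Ioo_eq_nhdsLT hab]
    exact ((he b (right_mem_Icc.2 hab.le)).mono Ioo_subset_Icc_self).tendsto
  exact le_of_tendsto hcont (eventually_of_mem (Ioo_mem_nhdsLT ht₁.2) hbarrier)

end ComparisonNearEndpoint

lemma le_of_relaxed_guidance_ineq {a b c δbar : ℝ} {φ γ y ybar Dy δ : ℝ → ℝ}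
    (hab : a < b) (hc : 0 < c)
    (hφ : ContinuousOn φ (Ico a b)) (hφblow : Tendsto φ (𝓝[<] b) atTop)
    (hdiv : Tendsto (fun t => ∫ s in a..t, φ s) (𝓝[<] b) atTop)
    (hy : ContinuousOn y (Icc a b)) (hDy : ∀ t ∈ Ico a b, HasDerivWithinAt y (Dy t) (Ico a b) t)
    (hybar : ContinuousOn ybar (Icc a b)) (hybar' : DifferentiableOn ℝ ybar (Ico a b))
    (hδ : ∀ t ∈ Ico a b, δ t ≤ δbar)
    (hγ : ∀ t ∈ Ico a b, γ (ybar t - y t) ≤ c * φ t * (ybar t - y t))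
    (hineq : ∀ t ∈ Ico a b, Dy t ≤ γ (ybar t - y t) + derivWithin ybar (Ico a b) t + δ t) :
    y b ≤ ybar b := by
  have hgap : y b - ybar b ≤ 0 := by
    refine nonpos_of_deriv_le_neg_mul_add (e := fun t => y t - ybar t)
      (e' := fun t => Dy t - derivWithin ybar (Ico a b) t) (δ := δbar)
      hab hc hφ hφblow hdiv (hy.sub hybar) (fun t ht => ?_) (fun t ht => ?_)
    · have ht' : t ∈ Ico a b := Ioo_subset_Ico_self ht
      exact ((hDy t ht').sub (hybar' t ht').hasDerivWithinAt).hasDerivAt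
        (Ico_mem_nhds ht.1 ht.2)
    · have ht' : t ∈ Ico a b := Ioo_subset_Ico_self ht
      linarith [hineq t ht', hγ t ht', hδ t ht']
  linarith

theorem certification_under_bounded_slack_general
    {d Ng Nh : ℕ}
    (c_γ : ℝ) (hcγ : 0 < c_γ)
    (φ : ℝ → ℝ)
    (hφcont : ContinuousOn φ (Set.Ico 0 1))
    (hφblow : Tendsto φ (nhdsWithin 1 (Set.Iio 1)) atTop)
    (hφdiv : Tendsto (fun t => ∫ s in (0:ℝ)..t, φ s) (nhdsWithin 1 (Set.Iio 1)) atTop)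
    (traj : ℝ → EuclideanSpace ℝ (Fin d))
    (htraj : ContinuousOn traj (Set.Icc 0 1))
    (g : Fin Ng → EuclideanSpace ℝ (Fin d) → ℝ) (hg : ∀ i, Differentiable ℝ (g i))
    (h : Fin Nh → EuclideanSpace ℝ (Fin d) → ℝ) (hh : ∀ j, Differentiable ℝ (h j))
    (G : EuclideanSpace ℝ (Fin d) → ℝ) (hG : ∀ x, G x = ∑ i, (g i x) ^ 2)
    (DG : ℝ → ℝ) (Dh : Fin Nh → ℝ → ℝ)
    (hDG : ∀ t ∈ Set.Ico (0:ℝ) 1,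
      HasDerivWithinAt (fun s => G (traj s)) (DG t) (Set.Ico 0 1) t)
    (hDh : ∀ j, ∀ t ∈ Set.Ico (0:ℝ) 1,
      HasDerivWithinAt (fun s => h j (traj s)) (Dh j t) (Set.Ico 0 1) t)
    (gbar : ℝ → ℝ) (hbar : Fin Nh → ℝ → ℝ)
    (hgbarcont : ContinuousOn gbar (Set.Icc 0 1))
    (hhbarcont : ∀ j, ContinuousOn (hbar j) (Set.Icc 0 1))
    (hgbardiff : DifferentiableOn ℝ gbar (Set.Ico 0 1))
    (hhbardiff : ∀ j, DifferentiableOn ℝ (hbar j) (Set.Ico 0 1))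
    (hgbar1 : gbar 1 = 0) (hhbar1 : ∀ j, hbar j 1 = 0)
    (δg : ℝ → ℝ) (δh : Fin Nh → ℝ → ℝ)
    (δgbar : ℝ) (δhbar : Fin Nh → ℝ)
    (hδg : ∀ t ∈ Set.Ico (0:ℝ) 1, δg t ≤ δgbar)
    (hδh : ∀ j, ∀ t ∈ Set.Ico (0:ℝ) 1, δh j t ≤ δhbar j)
    (γ : ℝ → ℝ)
    (hγdom_g : ∀ t ∈ Set.Ico (0:ℝ) 1,
      γ (gbar t - G (traj t)) ≤ c_γ * φ t * (gbar t - G (traj t)))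
    (hγdom_h : ∀ j, ∀ t ∈ Set.Ico (0:ℝ) 1,
      γ (hbar j t - h j (traj t)) ≤ c_γ * φ t * (hbar j t - h j (traj t)))
    (hineq_g : ∀ t ∈ Set.Ico (0:ℝ) 1,
      DG t ≤ γ (gbar t - G (traj t)) + derivWithin gbar (Set.Ico 0 1) t + δg t)
    (hineq_h : ∀ j, ∀ t ∈ Set.Ico (0:ℝ) 1,
      Dh j t ≤ γ (hbar j t - h j (traj t)) + derivWithin (hbar j) (Set.Ico 0 1) t + δh j t) :
    (∀ i, g i (traj 1) = 0) ∧ ∀ j, h j (traj 1) ≤ 0 := by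
  have hGcont : Continuous G := by
    rw [funext hG]
    exact continuous_finsetSum _ fun i _ => (hg i).continuous.pow 2
  have hG1 : G (traj 1) ≤ 0 := by
    simpa [hgbar1] using le_of_relaxed_guidance_ineq one_pos hcγ hφcont hφblow hφdiv
      (hGcont.comp_continuousOn htraj) hDG hgbarcont hgbardiff hδg hγdom_g hineq_g
  refine ⟨fun i => ?_, fun j => ?_⟩
  · have hsum : ∑ i, g i (traj 1) ^ 2 = 0 :=
      (hG _ ▸ hG1).antisymm (Finset.sum_nonneg fun i _ => sq_nonneg _)
    exact pow_eq_zero_iff two_ne_zero |>.1 <|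
      (Finset.sum_eq_zero_iff_of_nonneg fun i _ => sq_nonneg _).1 hsum i (Finset.mem_univ i)
  · simpa [hhbar1 j] using le_of_relaxed_guidance_ineq one_pos hcγ hφcont hφblow hφdiv
      ((hh j).continuous.comp_continuousOn htraj) (hDh j) (hhbarcont j) (hhbardiff j)
      (hδh j) (hγdom_h j) (hineq_h j)

/-- Theorem 4 (certification under bounded slack with a blow-up gain): despite
bounded slack terms `δ` in the guidance differential inequalities, if the gain
function `γ` is dominated along the trajectory by the blow-up gain `c_γ · φ t`,
where `φ > 0` is continuous on `[0,1)` with `φ t → ∞` and `∫₀¹ φ = ∞`, then all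
equality constraints `g i (traj 1) = 0` and inequality constraints
`h j (traj 1) ≤ 0` hold at the terminal time `t = 1`. -/
theorem certification_under_bounded_slack
    {d Ng Nh : ℕ}
    (c_γ : ℝ) (hcγ : 0 < c_γ)
    (φ : ℝ → ℝ)
    (hφcont : ContinuousOn φ (Set.Ico 0 1))
    (hφpos : ∀ t ∈ Set.Ico (0:ℝ) 1, 0 < φ t)
    (hφblow : Tendsto φ (nhdsWithin 1 (Set.Iio 1)) atTop)
    (hφdiv : Tendsto (fun t => ∫ s in (0:ℝ)..t, φ s) (nhdsWithin 1 (Set.Iio 1)) atTop)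
    (traj : ℝ → EuclideanSpace ℝ (Fin d))
    (htraj : ContinuousOn traj (Set.Icc 0 1))
    (g : Fin Ng → EuclideanSpace ℝ (Fin d) → ℝ) (hg : ∀ i, Differentiable ℝ (g i))
    (h : Fin Nh → EuclideanSpace ℝ (Fin d) → ℝ) (hh : ∀ j, Differentiable ℝ (h j))
    (G : EuclideanSpace ℝ (Fin d) → ℝ) (hG : ∀ x, G x = ∑ i, (g i x) ^ 2)
    (DG : ℝ → ℝ) (Dh : Fin Nh → ℝ → ℝ)
    (hDG : ∀ t ∈ Set.Ico (0:ℝ) 1,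
      HasDerivWithinAt (fun s => G (traj s)) (DG t) (Set.Ico 0 1) t)
    (hDh : ∀ j, ∀ t ∈ Set.Ico (0:ℝ) 1,
      HasDerivWithinAt (fun s => h j (traj s)) (Dh j t) (Set.Ico 0 1) t)
    (gbar : ℝ → ℝ) (hbar : Fin Nh → ℝ → ℝ)
    (hgbarcont : ContinuousOn gbar (Set.Icc 0 1))
    (hhbarcont : ∀ j, ContinuousOn (hbar j) (Set.Icc 0 1))
    (hgbardiff : DifferentiableOn ℝ gbar (Set.Ico 0 1))
    (hhbardiff : ∀ j, DifferentiableOn ℝ (hbar j) (Set.Ico 0 1))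
    (hgbar1 : gbar 1 = 0) (hhbar1 : ∀ j, hbar j 1 = 0)
    (δg : ℝ → ℝ) (δh : Fin Nh → ℝ → ℝ)
    (δgbar : ℝ) (δhbar : Fin Nh → ℝ)
    (hδgbar : 0 < δgbar) (hδhbar : ∀ j, 0 < δhbar j)
    (hδg : ∀ t ∈ Set.Ico (0:ℝ) 1, δg t ≤ δgbar)
    (hδh : ∀ j, ∀ t ∈ Set.Ico (0:ℝ) 1, δh j t ≤ δhbar j)
    (γ : ℝ → ℝ)
    (hγdom_g : ∀ t ∈ Set.Ico (0:ℝ) 1,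
      γ (gbar t - G (traj t)) ≤ c_γ * φ t * (gbar t - G (traj t)))
    (hγdom_h : ∀ j, ∀ t ∈ Set.Ico (0:ℝ) 1,
      γ (hbar j t - h j (traj t)) ≤ c_γ * φ t * (hbar j t - h j (traj t)))
    (hineq_g : ∀ t ∈ Set.Ico (0:ℝ) 1,
      DG t ≤ γ (gbar t - G (traj t)) + derivWithin gbar (Set.Ico 0 1) t + δg t)
    (hineq_h : ∀ j, ∀ t ∈ Set.Ico (0:ℝ) 1,
      Dh j t ≤ γ (hbar j t - h j (traj t)) + derivWithin (hbar j) (Set.Ico 0 1) t + δh j t) :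
    (∀ i, g i (traj 1) = 0) ∧ ∀ j, h j (traj 1) ≤ 0 :=
  certification_under_bounded_slack_general c_γ hcγ φ hφcont hφblow hφdiv traj htraj g hg h hh G hG
    DG Dh hDG hDh gbar hbar hgbarcont hhbarcont hgbardiff hhbardiff hgbar1 hhbar1 δg δh δgbar δhbar
    hδg hδh γ hγdom_g hγdom_h hineq_g hineq_h
end

section
/- Let c > 0 and let φ : [0,1) → (0,∞) be continuous with ∫₀¹ φ(s) ds = ∞. Then lim_{t→1⁻} ∫₀^t exp(− c ∫_s^t φ(τ) dτ) ds = 0. -/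
open Set Filter

/-- Key integral estimate for Theorem 4: if `φ > 0` is continuous on `[0,1)` with
`∫₀¹ φ = ∞`, then `∫₀ᵗ exp(-c ∫ₛᵗ φ) ds → 0` as `t → 1⁻`. -/
theorem exponential_kernel_convolution_vanishes
    (c : ℝ) (hc : 0 < c)
    (φ : ℝ → ℝ)
    (hφcont : ContinuousOn φ (Set.Ico 0 1))
    (hφpos : ∀ t ∈ Set.Ico (0:ℝ) 1, 0 < φ t)
    (hφdiv : Tendsto (fun t => ∫ s in (0:ℝ)..t, φ s) (nhdsWithin 1 (Set.Iio 1)) atTop) :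
    Tendsto (fun t => ∫ s in (0:ℝ)..t, Real.exp (- c * ∫ τ in s..t, φ τ))
      (nhdsWithin 1 (Set.Iio 1)) (nhds 0) := by
  have hφint : ∀ u v : ℝ, 0 ≤ u → u ≤ v → v < 1 →
      IntervalIntegrable φ MeasureTheory.volume u v := by
    intro u v hu huv hv
    apply (hφcont.mono ?_).intervalIntegrable
    rw [uIcc_of_le huv]
    exact fun x hx => ⟨le_trans hu hx.1, lt_of_le_of_lt hx.2 hv⟩
  have hφI : ∀ u v : ℝ, 0 ≤ u → u ≤ v → v < 1 → 0 ≤ ∫ τ in u..v, φ τ := fun u v hu huv hv =>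
    intervalIntegral.integral_nonneg huv
      (fun x hx => (hφpos x ⟨le_trans hu hx.1, lt_of_le_of_lt hx.2 hv⟩).le)
  rw [NormedAddCommGroup.tendsto_nhds_zero]
  intro ε hε
  set a : ℝ := max 0 (1 - ε / 2) with hadef
  have ha0 : (0:ℝ) ≤ a := le_max_left _ _
  have ha1 : a < 1 := max_lt one_pos (by linarith)
  have h1a : 1 - a ≤ ε / 2 := by
    have : 1 - ε / 2 ≤ a := le_max_right _ _
    linarith
  have hgtend : Tendsto
      (fun t => a * Real.exp (-(c * ((∫ s in (0:ℝ)..t, φ s) - ∫ s in (0:ℝ)..a, φ s))) + (t - a))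
      (nhdsWithin 1 (Set.Iio 1)) (nhds (a * 0 + (1 - a))) := by
    apply Tendsto.add
    · apply Tendsto.const_mul
      apply Real.tendsto_exp_neg_atTop_nhds_zero.comp
      exact (tendsto_atTop_add_const_right _ _ hφdiv).const_mul_atTop hc
    · exact ((continuous_id.sub continuous_const).tendsto 1).mono_left nhdsWithin_le_nhds
  have hglt : ∀ᶠ t in nhdsWithin (1:ℝ) (Set.Iio 1),
      a * Real.exp (-(c * ((∫ s in (0:ℝ)..t, φ s) - ∫ s in (0:ℝ)..a, φ s))) + (t - a) < ε :=
    hgtend.eventually_lt_const (by nlinarith)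
  have hta : ∀ᶠ t in nhdsWithin (1:ℝ) (Set.Iio 1), a < t :=
    (eventually_gt_nhds ha1).filter_mono nhdsWithin_le_nhds
  filter_upwards [hglt, hta, self_mem_nhdsWithin] with t hg hat ht1
  rw [Set.mem_Iio] at ht1
  have h0t : (0:ℝ) ≤ t := le_trans ha0 hat.le
  -- notation
  set K : ℝ := Real.exp (-(c * ((∫ s in (0:ℝ)..t, φ s) - ∫ s in (0:ℝ)..a, φ s))) with hKdef
  have hFat : (∫ s in (0:ℝ)..t, φ s) - (∫ s in (0:ℝ)..a, φ s) = ∫ τ in a..t, φ τ :=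
    intervalIntegral.integral_interval_sub_left (hφint 0 t le_rfl h0t ht1)
      (hφint 0 a le_rfl ha0 ha1)
  -- continuity of the integrand on [0, t]
  have hIcont : ContinuousOn (fun s => Real.exp (- c * ∫ τ in s..t, φ τ)) (Icc 0 t) := by
    have hprim : ContinuousOn (fun s => ∫ τ in s..t, φ τ) (Icc 0 t) := by
      have hiOn : MeasureTheory.IntegrableOn φ (uIcc 0 t) MeasureTheory.volume := by
        rw [uIcc_of_le h0t]
        exact (hφcont.mono (fun x hx => ⟨hx.1, lt_of_le_of_lt hx.2 ht1⟩)).integrableOn_Icc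
      have := intervalIntegral.continuousOn_primitive_interval_left hiOn
      rwa [uIcc_of_le h0t] at this
    exact (Real.continuous_exp.comp_continuousOn (hprim.const_smul (-c)))
  have hint1 : IntervalIntegrable (fun s => Real.exp (- c * ∫ τ in s..t, φ τ))
      MeasureTheory.volume 0 a := by
    apply (hIcont.mono ?_).intervalIntegrable
    rw [uIcc_of_le ha0]
    exact Icc_subset_Icc le_rfl hat.le
  have hint2 : IntervalIntegrable (fun s => Real.exp (- c * ∫ τ in s..t, φ τ))
      MeasureTheory.volume a t := by
    apply (hIcont.mono ?_).intervalIntegrable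
    rw [uIcc_of_le hat.le]
    exact Icc_subset_Icc ha0 le_rfl
  have hsplit : (∫ s in (0:ℝ)..t, Real.exp (- c * ∫ τ in s..t, φ τ)) =
      (∫ s in (0:ℝ)..a, Real.exp (- c * ∫ τ in s..t, φ τ)) +
      (∫ s in a..t, Real.exp (- c * ∫ τ in s..t, φ τ)) :=
    (intervalIntegral.integral_add_adjacent_intervals hint1 hint2).symm
  have hb1 : (∫ s in (0:ℝ)..a, Real.exp (- c * ∫ τ in s..t, φ τ)) ≤ a * K := by
    have hmono : ∀ s ∈ Icc (0:ℝ) a, Real.exp (- c * ∫ τ in s..t, φ τ) ≤ K := by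
      intro s hs
      rw [hKdef, hFat]
      apply Real.exp_le_exp.mpr
      have hsa : (∫ τ in s..a, φ τ) + (∫ τ in a..t, φ τ) = ∫ τ in s..t, φ τ :=
        intervalIntegral.integral_add_adjacent_intervals
          (hφint s a hs.1 hs.2 ha1) (hφint a t ha0 hat.le ht1)
      have h0sa : 0 ≤ ∫ τ in s..a, φ τ := hφI s a hs.1 hs.2 ha1
      nlinarith [hc]
    calc (∫ s in (0:ℝ)..a, Real.exp (- c * ∫ τ in s..t, φ τ))
        ≤ ∫ _ in (0:ℝ)..a, K :=
          intervalIntegral.integral_mono_on ha0 hint1 intervalIntegrable_const hmono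
      _ = a * K := by simp
  have hb2 : (∫ s in a..t, Real.exp (- c * ∫ τ in s..t, φ τ)) ≤ t - a := by
    have hmono : ∀ s ∈ Icc a t, Real.exp (- c * ∫ τ in s..t, φ τ) ≤ 1 := by
      intro s hs
      rw [show (1:ℝ) = Real.exp 0 by simp]
      apply Real.exp_le_exp.mpr
      have := hφI s t (le_trans ha0 hs.1) hs.2 ht1
      nlinarith [hc]
    calc (∫ s in a..t, Real.exp (- c * ∫ τ in s..t, φ τ))
        ≤ ∫ _ in a..t, (1:ℝ) :=
          intervalIntegral.integral_mono_on hat.le hint2 intervalIntegrable_const hmono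
      _ = t - a := by simp
  have hpos : 0 ≤ ∫ s in (0:ℝ)..t, Real.exp (- c * ∫ τ in s..t, φ τ) :=
    intervalIntegral.integral_nonneg h0t (fun s _ => (Real.exp_pos _).le)
  rw [Real.norm_eq_abs, abs_of_nonneg hpos, hsplit]
  calc (∫ s in (0:ℝ)..a, Real.exp (- c * ∫ τ in s..t, φ τ)) +
        (∫ s in a..t, Real.exp (- c * ∫ τ in s..t, φ τ)) ≤ a * K + (t - a) := by
        exact add_le_add hb1 hb2
    _ < ε := hg
end

section
/- Let d ≥ 1, c_r ∈ [0,1), and 0 < c_g < c_PT, and define ξ₀ := (c_PT/(c_PT − c_g)) · e^{c_g c_r/(1−c_r)}/(1−c_r)² and ξ_∂ := (e^{c_g c_r/(1−c_r)}/(c_PT − c_g)) · (1 + c_PT c_r/(1−c_r)²). Let g_1, …, g_{N_g} : ℝ^d → ℝ be differentiable with g := Σ_i g_i² satisfying ‖∇g(x)‖ ≤ L_g for all x ∈ ℝ^d, and let h_1, …, h_{N_h} : ℝ^d → ℝ be differentiable with ‖∇h_j(x)‖ ≤ L_{h,j} for all x and all j, and with h_j(𝒯(0)) ≥ 0 for all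 j. Let v : [0,1] × ℝ^d → ℝ^d satisfy ‖v(t,x)‖ ≤ v̄ for all t, x, and let 𝒯 : [0,1] → ℝ^d solve the unconstrained flow 𝒯'(t) = v(t, 𝒯(t)). Define ḡ(t) := e^{c_g − c_g/(1−t)} ḡ(0) and h̄_j(t) := e^{c_g − c_g/(1−t)} h̄_j(0), and the time-varying gain γ_t(a) := c_PT a/(1−t)². If the initial values satisfy ḡ(0) ≥ ξ₀ g(𝒯(0)) + ξ_∂ L_g v̄ and h̄_j(0) ≥ ξ₀ h_j(𝒯(0)) + ξ_∂ L_{h,j} v̄ for all j, then for every t ∈ [0, c_r]: (d/dt) g(𝒯(t)) ≤ γ_t(ḡ(t) − g(𝒯(t))) + ḡ'(t) and (d/dt) h_j(𝒯(t)) ≤ γ_t(h̄_j(t) − h_j(𝒯(t))) + h̄_j'(t) for all j; consequently the zero guidance input u_t = 0 satisfies all constraints of the guidance quadratic program, so free (unguided) generation is optimal throughout the early stage [0, c_r]. -/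
open Set
open scoped InnerProductSpace

/-!
Along the unconstrained flow the rate of change of a constraint `f` is `⟪∇f, v⟫`, so it is at
most `L v̄`, and `f` grows by at most `L v̄ t` from its initial value. The reference
`b(t) = exp (c_g - c_g / (1 - t)) b₀` satisfies `b' = -c_g b / (1 - t)²` and decreases, but on
`[0, c_r]` it stays above `exp (-c_g c_r / (1 - c_r)) b₀`. Multiplied by `(1 - t)²`, the
prescribed-time inequality reads `D (1 - t)² + c_PT f ≤ (c_PT - c_g) b`, and `ξ₀`, `ξ_∂` are
exactly the constants for which the worst cases of these three bounds close it.
-/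

theorem hasDerivAt_exp_sub_div_one_sub (c : ℝ) {t : ℝ} (ht : t ≠ 1) :
    HasDerivAt (fun s => Real.exp (c - c / (1 - s)))
      (-(c / (1 - t) ^ 2) * Real.exp (c - c / (1 - t))) t := by
  have hden : HasDerivAt (fun s : ℝ => 1 - s) (-1) t := by
    simpa using (hasDerivAt_id t).const_sub 1
  have hexp := ((hasDerivAt_const t c).fun_div hden (sub_ne_zero.2 ht.symm)).const_sub c |>.exp
  convert hexp using 1
  ring

theorem exp_neg_le_exp_sub_div_one_sub {c r t : ℝ} (hc : 0 ≤ c) (htr : t ≤ r)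
    (hr : r < 1) : Real.exp (-(c * r / (1 - r))) ≤ Real.exp (c - c / (1 - t)) := by
  have h1t : 0 < 1 - t := by linarith
  have h1r : 0 < 1 - r := by linarith
  have harg : c - c / (1 - t) = -(c * t / (1 - t)) := by field_simp; ring
  rw [Real.exp_le_exp, harg, neg_le_neg_iff, div_le_div_iff₀ h1t h1r]
  nlinarith [mul_nonneg hc (sub_nonneg.2 htr)]

theorem prescribed_time_margin {c_r c_g c_PT ξ₀ ξd t F₀ F M D b : ℝ}
    (hcr : c_r ∈ Ico (0 : ℝ) 1) (hPT : 0 ≤ c_PT) (hcgPT : c_g < c_PT)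
    (ht : t ∈ Icc (0 : ℝ) 1)
    (hξ₀ : ξ₀ = c_PT / (c_PT - c_g) * Real.exp (c_g * c_r / (1 - c_r)) / (1 - c_r) ^ 2)
    (hξd : ξd = Real.exp (c_g * c_r / (1 - c_r)) / (c_PT - c_g)
        * (1 + c_PT * c_r / (1 - c_r) ^ 2))
    (hF₀ : 0 ≤ F₀) (hM : 0 ≤ M) (hD : D ≤ M) (hF : F ≤ F₀ + M * c_r)
    (hb : Real.exp (-(c_g * c_r / (1 - c_r))) * (ξ₀ * F₀ + ξd * M) ≤ b) :
    D * (1 - t) ^ 2 + c_PT * F ≤ (c_PT - c_g) * b := by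
  obtain ⟨hcr0, hcr1⟩ := hcr
  have hgap : 0 < c_PT - c_g := sub_pos.2 hcgPT
  have hden : 0 < (1 - c_r) ^ 2 := pow_pos (sub_pos.2 hcr1) 2
  have hden_le : (1 - c_r) ^ 2 ≤ 1 := by nlinarith
  have hξ : (c_PT - c_g) * (Real.exp (-(c_g * c_r / (1 - c_r))) * (ξ₀ * F₀ + ξd * M))
      = c_PT * F₀ / (1 - c_r) ^ 2 + (1 + c_PT * c_r / (1 - c_r) ^ 2) * M := by
    rw [hξ₀, hξd, Real.exp_neg]
    field_simp
  have hF₀' : c_PT * F₀ ≤ c_PT * F₀ / (1 - c_r) ^ 2 :=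
    le_div_self (mul_nonneg hPT hF₀) hden hden_le
  have hM' : c_PT * c_r * M ≤ c_PT * c_r * M / (1 - c_r) ^ 2 :=
    le_div_self (by positivity) hden hden_le
  have hD' : D * (1 - t) ^ 2 ≤ M := by
    have hsq : (1 - t) ^ 2 ≤ 1 := by nlinarith [ht.1, ht.2]
    nlinarith [mul_le_mul_of_nonneg_right hD (sq_nonneg (1 - t))]
  calc D * (1 - t) ^ 2 + c_PT * F
      ≤ M + c_PT * (F₀ + M * c_r) := add_le_add hD' (mul_le_mul_of_nonneg_left hF hPT)
    _ ≤ c_PT * F₀ / (1 - c_r) ^ 2 + (1 + c_PT * c_r / (1 - c_r) ^ 2) * M := by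
      rw [mul_div_right_comm] at hM'
      nlinarith
    _ = (c_PT - c_g) * (Real.exp (-(c_g * c_r / (1 - c_r))) * (ξ₀ * F₀ + ξd * M)) :=
      hξ.symm
    _ ≤ (c_PT - c_g) * b := mul_le_mul_of_nonneg_left hb hgap.le

section Flow

variable {E : Type*} [NormedAddCommGroup E] [InnerProductSpace ℝ E] [CompleteSpace E]

theorem HasGradientAt.comp_hasDerivWithinAt {f : E → ℝ} {f' : E} {γ : ℝ → E} {γ' : E}
    {s : Set ℝ} {t : ℝ} (hf : HasGradientAt f f' (γ t)) (hγ : HasDerivWithinAt γ γ' s t) :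
    HasDerivWithinAt (fun x => f (γ x)) ⟪f', γ'⟫_ℝ s t := by
  simpa [InnerProductSpace.toDual_apply_apply, Function.comp_def] using
    hf.hasFDerivAt.comp_hasDerivWithinAt t hγ

variable {f : E → ℝ} {L V : ℝ} {v : ℝ → E → E} {γ : ℝ → E}

theorem hasDerivWithinAt_comp_flow (hf : Differentiable ℝ f)
    (hflow : ∀ t ∈ Icc (0 : ℝ) 1, HasDerivWithinAt γ (v t (γ t)) (Icc 0 1) t)
    {t : ℝ} (ht : t ∈ Icc (0 : ℝ) 1) :
    HasDerivWithinAt (fun s => f (γ s)) ⟪gradient f (γ t), v t (γ t)⟫_ℝ (Icc 0 1) t :=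
  (hf _).hasGradientAt.comp_hasDerivWithinAt (hflow t ht)

theorem norm_inner_gradient_le (hL : ∀ x, ‖gradient f x‖ ≤ L)
    (hv : ∀ t x, ‖v t x‖ ≤ V) (t : ℝ) (x : E) : ‖⟪gradient f x, v t x⟫_ℝ‖ ≤ L * V :=
  (norm_inner_le_norm _ _).trans <|
    mul_le_mul (hL x) (hv t x) (norm_nonneg _) ((norm_nonneg _).trans (hL x))

theorem derivWithin_comp_flow_le (hf : Differentiable ℝ f) (hL : ∀ x, ‖gradient f x‖ ≤ L)
    (hv : ∀ t x, ‖v t x‖ ≤ V)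
    (hflow : ∀ t ∈ Icc (0 : ℝ) 1, HasDerivWithinAt γ (v t (γ t)) (Icc 0 1) t)
    {t : ℝ} (ht : t ∈ Icc (0 : ℝ) 1) :
    derivWithin (fun s => f (γ s)) (Icc 0 1) t ≤ L * V := by
  rw [(hasDerivWithinAt_comp_flow hf hflow ht).derivWithin (uniqueDiffOn_Icc one_pos t ht)]
  exact (le_abs_self _).trans (norm_inner_gradient_le hL hv t (γ t))

theorem comp_flow_le_add_mul (hf : Differentiable ℝ f) (hL : ∀ x, ‖gradient f x‖ ≤ L)
    (hv : ∀ t x, ‖v t x‖ ≤ V)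
    (hflow : ∀ t ∈ Icc (0 : ℝ) 1, HasDerivWithinAt γ (v t (γ t)) (Icc 0 1) t)
    {t : ℝ} (ht : t ∈ Icc (0 : ℝ) 1) :
    f (γ t) ≤ f (γ 0) + L * V * t := by
  have hgrowth := norm_image_sub_le_of_norm_deriv_le_segment'
    (fun s hs => hasDerivWithinAt_comp_flow hf hflow hs)
    (fun s _ => norm_inner_gradient_le hL hv s (γ s)) t ht
  rw [sub_zero] at hgrowth
  linarith [(le_abs_self _).trans hgrowth]

theorem derivWithin_comp_flow_le_prescribed_time
    {c_r c_g c_PT ξ₀ ξd b₀ : ℝ}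
    (hcr : c_r ∈ Ico (0 : ℝ) 1) (hcg : 0 ≤ c_g) (hcgPT : c_g < c_PT)
    (hξ₀ : ξ₀ = c_PT / (c_PT - c_g) * Real.exp (c_g * c_r / (1 - c_r)) / (1 - c_r) ^ 2)
    (hξd : ξd = Real.exp (c_g * c_r / (1 - c_r)) / (c_PT - c_g)
        * (1 + c_PT * c_r / (1 - c_r) ^ 2))
    (hf : Differentiable ℝ f) (hL : ∀ x, ‖gradient f x‖ ≤ L) (hv : ∀ t x, ‖v t x‖ ≤ V)
    (hflow : ∀ t ∈ Icc (0 : ℝ) 1, HasDerivWithinAt γ (v t (γ t)) (Icc 0 1) t)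
    (hf₀ : 0 ≤ f (γ 0)) (hb₀ : ξ₀ * f (γ 0) + ξd * L * V ≤ b₀)
    {t : ℝ} (ht : t ∈ Icc 0 c_r) :
    derivWithin (fun s => f (γ s)) (Icc 0 1) t
      ≤ c_PT * (Real.exp (c_g - c_g / (1 - t)) * b₀ - f (γ t)) / (1 - t) ^ 2
        + deriv (fun s => Real.exp (c_g - c_g / (1 - s)) * b₀) t := by
  have ht₁ : t ∈ Icc (0 : ℝ) 1 := ⟨ht.1, ht.2.trans hcr.2.le⟩
  have hgap : 0 < c_PT - c_g := sub_pos.2 hcgPT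
  have hPT : 0 ≤ c_PT := hcg.trans hcgPT.le
  have hM : 0 ≤ L * V := (norm_nonneg _).trans (norm_inner_gradient_le hL hv 0 (γ 0))
  have hξ₀_nonneg : 0 ≤ ξ₀ :=
    hξ₀ ▸ div_nonneg (mul_nonneg (div_nonneg hPT hgap.le) (Real.exp_pos _).le) (sq_nonneg _)
  have hξd_nonneg : 0 ≤ ξd :=
    hξd ▸ mul_nonneg (div_nonneg (Real.exp_pos _).le hgap.le)
      (by have := hcr.1; positivity)
  have hb₀_nonneg : 0 ≤ b₀ := by
    nlinarith [mul_nonneg hξ₀_nonneg hf₀, mul_nonneg hξd_nonneg hM]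
  set b := Real.exp (c_g - c_g / (1 - t)) * b₀
  have hderiv :
      deriv (fun s => Real.exp (c_g - c_g / (1 - s)) * b₀) t = -(c_g / (1 - t) ^ 2) * b := by
    rw [((hasDerivAt_exp_sub_div_one_sub c_g (by linarith [ht.2, hcr.2])).mul_const b₀).deriv,
      mul_assoc]
  have hb : Real.exp (-(c_g * c_r / (1 - c_r))) * (ξ₀ * f (γ 0) + ξd * (L * V)) ≤ b :=
    mul_le_mul (exp_neg_le_exp_sub_div_one_sub hcg ht.2 hcr.2) (by linarith)
      (by positivity) (Real.exp_pos _).le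
  have hF : f (γ t) ≤ f (γ 0) + L * V * c_r :=
    (comp_flow_le_add_mul hf hL hv hflow ht₁).trans (by nlinarith [ht.2])
  have hmargin := prescribed_time_margin hcr hPT hcgPT ht₁ hξ₀ hξd hf₀ hM
    (derivWithin_comp_flow_le hf hL hv hflow ht₁) hF hb
  have hden : 0 < (1 - t) ^ 2 := pow_pos (by linarith [ht.2, hcr.2]) 2
  have hrhs : c_PT * (b - f (γ t)) / (1 - t) ^ 2 + -(c_g / (1 - t) ^ 2) * b
      = ((c_PT - c_g) * b - c_PT * f (γ t)) / (1 - t) ^ 2 := by ring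
  rw [hderiv, hrhs, le_div_iff₀ hden]
  linarith

end Flow

theorem free_generation_early_stage_general
    {d Ng Nh : ℕ}
    (c_r c_g c_PT : ℝ)
    (hcr : c_r ∈ Set.Ico (0:ℝ) 1) (hcg : 0 < c_g) (hcgPT : c_g < c_PT)
    (ξ₀ ξd : ℝ)
    (hξ₀ : ξ₀ = c_PT / (c_PT - c_g) * Real.exp (c_g * c_r / (1 - c_r)) / (1 - c_r) ^ 2)
    (hξd : ξd = Real.exp (c_g * c_r / (1 - c_r)) / (c_PT - c_g)
        * (1 + c_PT * c_r / (1 - c_r) ^ 2))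
    (g : Fin Ng → EuclideanSpace ℝ (Fin d) → ℝ) (hg : ∀ i, Differentiable ℝ (g i))
    (G : EuclideanSpace ℝ (Fin d) → ℝ) (hGdef : ∀ x, G x = ∑ i, (g i x) ^ 2)
    (L_g : ℝ) (hLg : ∀ x, ‖gradient G x‖ ≤ L_g)
    (h : Fin Nh → EuclideanSpace ℝ (Fin d) → ℝ) (hh : ∀ j, Differentiable ℝ (h j))
    (L_h : Fin Nh → ℝ) (hLh : ∀ j x, ‖gradient (h j) x‖ ≤ L_h j)
    (v : ℝ → EuclideanSpace ℝ (Fin d) → EuclideanSpace ℝ (Fin d))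
    (vbar : ℝ) (hv : ∀ t x, ‖v t x‖ ≤ vbar)
    (traj : ℝ → EuclideanSpace ℝ (Fin d))
    (hflow : ∀ t ∈ Set.Icc (0:ℝ) 1, HasDerivWithinAt traj (v t (traj t)) (Set.Icc 0 1) t)
    (hh0 : ∀ j, 0 ≤ h j (traj 0))
    (gbar0 : ℝ) (hbar0 : Fin Nh → ℝ)
    (gbar : ℝ → ℝ) (hgbar : ∀ t, gbar t = Real.exp (c_g - c_g / (1 - t)) * gbar0)
    (hbar : Fin Nh → ℝ → ℝ)
    (hhbar : ∀ j t, hbar j t = Real.exp (c_g - c_g / (1 - t)) * hbar0 j)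
    (hinit_g : ξ₀ * G (traj 0) + ξd * L_g * vbar ≤ gbar0)
    (hinit_h : ∀ j, ξ₀ * h j (traj 0) + ξd * L_h j * vbar ≤ hbar0 j) :
    ∀ t ∈ Set.Icc (0:ℝ) c_r,
      (derivWithin (fun s => G (traj s)) (Set.Icc 0 1) t
          ≤ c_PT * (gbar t - G (traj t)) / (1 - t) ^ 2 + deriv gbar t) ∧
      ∀ j, derivWithin (fun s => h j (traj s)) (Set.Icc 0 1) t
          ≤ c_PT * (hbar j t - h j (traj t)) / (1 - t) ^ 2 + deriv (hbar j) t := by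
  obtain rfl : gbar = fun t => Real.exp (c_g - c_g / (1 - t)) * gbar0 := funext hgbar
  obtain rfl : hbar = fun j t => Real.exp (c_g - c_g / (1 - t)) * hbar0 j := funext₂ hhbar
  have hG : Differentiable ℝ G := by
    rw [funext hGdef]
    exact Differentiable.fun_sum fun i _ => (hg i).pow 2
  have hG₀ : 0 ≤ G (traj 0) := (hGdef _).symm ▸ Finset.sum_nonneg fun i _ => sq_nonneg _
  intro t ht
  exact ⟨derivWithin_comp_flow_le_prescribed_time hcr hcg.le hcgPT hξ₀ hξd hG hLg hv hflow
      hG₀ hinit_g ht,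
    fun j => derivWithin_comp_flow_le_prescribed_time hcr hcg.le hcgPT hξ₀ hξd (hh j) (hLh j)
      hv hflow (hh0 j) (hinit_h j) ht⟩

/-- Theorem 5 (free generation in the early stage): along the unconstrained flow
`traj' t = v t (traj t)` with bounded velocity field, Lipschitz constraint
functions, and PTZF references `gbar`, `hbar j` with sufficiently large initial
values, the prescribed-time differential inequalities (with time-varying gain
`a ↦ c_PT · a / (1-t)²`) hold with zero guidance input throughout the early
stage `[0, c_r]`. -/
theorem free_generation_early_stage
    {d Ng Nh : ℕ} (hd : 1 ≤ d)
    (c_r c_g c_PT : ℝ)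
    (hcr : c_r ∈ Set.Ico (0:ℝ) 1) (hcg : 0 < c_g) (hcgPT : c_g < c_PT)
    (ξ₀ ξd : ℝ)
    (hξ₀ : ξ₀ = c_PT / (c_PT - c_g) * Real.exp (c_g * c_r / (1 - c_r)) / (1 - c_r) ^ 2)
    (hξd : ξd = Real.exp (c_g * c_r / (1 - c_r)) / (c_PT - c_g)
        * (1 + c_PT * c_r / (1 - c_r) ^ 2))
    (g : Fin Ng → EuclideanSpace ℝ (Fin d) → ℝ) (hg : ∀ i, Differentiable ℝ (g i))
    (G : EuclideanSpace ℝ (Fin d) → ℝ) (hGdef : ∀ x, G x = ∑ i, (g i x) ^ 2)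
    (L_g : ℝ) (hLg : ∀ x, ‖gradient G x‖ ≤ L_g)
    (h : Fin Nh → EuclideanSpace ℝ (Fin d) → ℝ) (hh : ∀ j, Differentiable ℝ (h j))
    (L_h : Fin Nh → ℝ) (hLh : ∀ j x, ‖gradient (h j) x‖ ≤ L_h j)
    (v : ℝ → EuclideanSpace ℝ (Fin d) → EuclideanSpace ℝ (Fin d))
    (vbar : ℝ) (hv : ∀ t x, ‖v t x‖ ≤ vbar)
    (traj : ℝ → EuclideanSpace ℝ (Fin d))
    (hflow : ∀ t ∈ Set.Icc (0:ℝ) 1, HasDerivWithinAt traj (v t (traj t)) (Set.Icc 0 1) t)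
    (hh0 : ∀ j, 0 ≤ h j (traj 0))
    (gbar0 : ℝ) (hbar0 : Fin Nh → ℝ)
    (gbar : ℝ → ℝ) (hgbar : ∀ t, gbar t = Real.exp (c_g - c_g / (1 - t)) * gbar0)
    (hbar : Fin Nh → ℝ → ℝ)
    (hhbar : ∀ j t, hbar j t = Real.exp (c_g - c_g / (1 - t)) * hbar0 j)
    (hinit_g : ξ₀ * G (traj 0) + ξd * L_g * vbar ≤ gbar0)
    (hinit_h : ∀ j, ξ₀ * h j (traj 0) + ξd * L_h j * vbar ≤ hbar0 j) :
    ∀ t ∈ Set.Icc (0:ℝ) c_r,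
      (derivWithin (fun s => G (traj s)) (Set.Icc 0 1) t
          ≤ c_PT * (gbar t - G (traj t)) / (1 - t) ^ 2 + deriv gbar t) ∧
      ∀ j, derivWithin (fun s => h j (traj s)) (Set.Icc 0 1) t
          ≤ c_PT * (hbar j t - h j (traj t)) / (1 - t) ^ 2 + deriv (hbar j) t :=
  free_generation_early_stage_general c_r c_g c_PT hcr hcg hcgPT ξ₀ ξd hξ₀ hξd g hg G hGdef L_g hLg
    h hh L_h hLh v vbar hv traj hflow hh0 gbar0 hbar0 gbar hgbar hbar hhbar hinit_g hinit_h
end
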